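/- Let M be a 5-manifold endowed with an SU(2)-structure given by almost contact metric structures (φᵢ, ξ, η, g), i = 1,2,3, with φᵢφⱼ = φₖ = −φⱼφᵢ for even permutations, and ωᵢ(X,Y) = g(φᵢX, Y). Then for any even permutation (i,j,k) of (1,2,3) and all vector fields X, Y, Z: 2g((∇_X φᵢ)Y, Z) = −dωᵢ(X, φᵢY, φᵢZ) + dωᵢ(X, Y, Z) − dωⱼ(Y, Z, φₖX) + dωⱼ(φᵢY, φᵢZ, φₖX) + dωₖ(Y, φᵢZ, φₖX) + dωₖ(φᵢY, Z, φₖX) + dη(φᵢY, Z)η(X) − dη(φᵢZ, Y)η(X) + dη(φᵢY, X)η(Z) − dη(φᵢZ, X)η(Y), where ∇ is the Levi-Civita connection of g. -/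

import Mathlib

/-!
An algebraic model of the differential calculus on a (parallelizable) smooth
manifold: `M` is the type of points, `V` is the model for the tangent spaces,
smooth functions are modelled by maps `M → ℝ` and vector fields by maps
`M → V`.  The data consists of the directional derivative `D` of functions,
the Lie bracket `lie` of vector fields, a Riemannian metric `g` and its
Levi-Civita connection `nabla` (characterized, as usual, by being the unique
metric torsion-free connection).
-/

noncomputable section

structure RGeo (M V : Type) [AddCommGroup V] [Module ℝ V] : Type where
  D : (M → V) → (M → ℝ) → (M → ℝ)
  lie : (M → V) → (M → V) → (M → V)
  g : M → V →ₗ[ℝ] V →ₗ[ℝ] ℝ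
  nabla : (M → V) → (M → V) → (M → V)
  g_symm : ∀ x u v, g x u v = g x v u
  g_posdef : ∀ x (v : V), v ≠ 0 → 0 < g x v v
  D_add_fun : ∀ X f₁ f₂, D X (f₁ + f₂) = D X f₁ + D X f₂
  D_mul_fun : ∀ X f₁ f₂, D X (f₁ * f₂) = f₁ * D X f₂ + f₂ * D X f₁
  D_const : ∀ X (c : ℝ), D X (fun _ => c) = 0
  D_add_vf : ∀ X Y f, D (X + Y) f = D X f + D Y f
  D_smul_vf : ∀ (f : M → ℝ) X φ, D (fun x => f x • X x) φ = f * D X φ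
  lie_antisymm : ∀ X Y, lie X Y = -(lie Y X)
  lie_add_left : ∀ X Y Z, lie (X + Y) Z = lie X Z + lie Y Z
  lie_leibniz : ∀ X (f : M → ℝ) Y,
    lie X (fun x => f x • Y x) = fun x => D X f x • Y x + f x • lie X Y x
  D_lie : ∀ X Y f, D (lie X Y) f = D X (D Y f) - D Y (D X f)
  nabla_add_left : ∀ X Y Z, nabla (X + Y) Z = nabla X Z + nabla Y Z
  nabla_smul_left : ∀ (f : M → ℝ) X Y,
    nabla (fun x => f x • X x) Y = fun x => f x • nabla X Y x
  nabla_add_right : ∀ X Y Z, nabla X (Y + Z) = nabla X Y + nabla X Z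
  nabla_leibniz : ∀ X (f : M → ℝ) Y,
    nabla X (fun x => f x • Y x) = fun x => D X f x • Y x + f x • nabla X Y x
  torsion_free : ∀ X Y, (fun x => nabla X Y x - nabla Y X x) = lie X Y
  metric_compat : ∀ X Y Z,
    D X (fun x => g x (Y x) (Z x)) =
      fun x => g x (nabla X Y x) (Z x) + g x (Y x) (nabla X Z x)

namespace RGeo

variable {M V : Type} [AddCommGroup V] [Module ℝ V]

/-- The metric evaluated on two vector fields. -/
def gf (Γ : RGeo M V) (X Y : M → V) : M → ℝ := fun x => Γ.g x (X x) (Y x)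

/-- Application of a `(1,1)`-tensor field to a vector field. -/
def tapp (A : M → V →ₗ[ℝ] V) (X : M → V) : M → V := fun x => A x (X x)

/-- The covariant derivative `(∇_X A) Y` of a `(1,1)`-tensor field `A`. -/
def covDer (Γ : RGeo M V) (A : M → V →ₗ[ℝ] V) (X Y : M → V) : M → V :=
  fun x => Γ.nabla X (tapp A Y) x - A x (Γ.nabla X Y x)

/-- The constant vector field with value `v`. -/
def cst (M : Type) {V : Type} [AddCommGroup V] [Module ℝ V] (v : V) : M → V := fun _ => v

/-- The Riemann curvature operator `R(X,Y)Z`. -/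
def curv (Γ : RGeo M V) (X Y Z : M → V) : M → V :=
  fun x => Γ.nabla X (Γ.nabla Y Z) x - Γ.nabla Y (Γ.nabla X Z) x - Γ.nabla (Γ.lie X Y) Z x

/-- A family of vectors is orthonormal at the point `x`. -/
def OrthonormalAt (Γ : RGeo M V) (x : M) {n : ℕ} (e : Fin n → V) : Prop :=
  ∀ i j, Γ.g x (e i) (e j) = if i = j then (1 : ℝ) else 0

/-- The Ricci tensor at `x`, computed with respect to a frame orthonormal at `x`. -/
def ricciAt (Γ : RGeo M V) (x : M) {n : ℕ} (e : Fin n → V) (u v : V) : ℝ :=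
  ∑ i, Γ.g x (curv Γ (cst M (e i)) (cst M u) (cst M v) x) (e i)

/-- The scalar curvature at `x`, computed with respect to a frame orthonormal at `x`. -/
def scalarAt (Γ : RGeo M V) (x : M) {n : ℕ} (e : Fin n → V) : ℝ :=
  ∑ i, ∑ j, Γ.g x (curv Γ (cst M (e i)) (cst M (e j)) (cst M (e j)) x) (e i)

/-- Exterior derivative of a 1-form (given by its values on vector fields). -/
def dOne (Γ : RGeo M V) (a : (M → V) → M → ℝ) (X Y : M → V) : M → ℝ :=
  Γ.D X (a Y) - Γ.D Y (a X) - a (Γ.lie X Y)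

/-- Exterior derivative of a 2-form (given by its values on vector fields). -/
def dTwo (Γ : RGeo M V) (ω : (M → V) → (M → V) → M → ℝ) (X Y Z : M → V) : M → ℝ :=
  Γ.D X (ω Y Z) - Γ.D Y (ω X Z) + Γ.D Z (ω X Y)
    - ω (Γ.lie X Y) Z + ω (Γ.lie X Z) Y - ω (Γ.lie Y Z) X

/-- Exterior derivative of a 3-form (given by its values on vector fields). -/
def dThree (Γ : RGeo M V) (c : (M → V) → (M → V) → (M → V) → M → ℝ)
    (X Y Z W : M → V) : M → ℝ :=
  Γ.D X (c Y Z W) - Γ.D Y (c X Z W) + Γ.D Z (c X Y W) - Γ.D W (c X Y Z)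
    - c (Γ.lie X Y) Z W + c (Γ.lie X Z) Y W - c (Γ.lie X W) Y Z
    - c (Γ.lie Y Z) X W + c (Γ.lie Y W) X Z - c (Γ.lie Z W) X Y

/-- Wedge product of a 1-form and a 2-form, on vector fields. -/
def w12 (a : (M → V) → M → ℝ) (b : (M → V) → (M → V) → M → ℝ)
    (X Y Z : M → V) : M → ℝ :=
  a X * b Y Z - a Y * b X Z + a Z * b X Y

/-- Wedge product of two 2-forms, on vector fields. -/
def w22 (b c : (M → V) → (M → V) → M → ℝ) (X Y Z W : M → V) : M → ℝ :=
  b X Y * c Z W - b X Z * c Y W + b X W * c Y Z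
    + b Y Z * c X W - b Y W * c X Z + b Z W * c X Y

/-- An almost contact metric structure `(φ, ξ, η, g)`. -/
structure ACMS (Γ : RGeo M V) : Type where
  phi : M → V →ₗ[ℝ] V
  xi : M → V
  eta : M → V →ₗ[ℝ] ℝ
  phi_sq : ∀ x (v : V), phi x (phi x v) = -v + eta x v • xi x
  eta_xi : ∀ x, eta x (xi x) = 1
  metric_phi : ∀ x (u v : V),
    Γ.g x (phi x u) (phi x v) = Γ.g x u v - eta x u * eta x v

variable {Γ : RGeo M V}

/-- `η` evaluated on vector fields. -/
def ACMS.etaf (S : ACMS Γ) : (M → V) → M → ℝ := fun X x => S.eta x (X x)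

/-- `φ` applied to a vector field. -/
def ACMS.phif (S : ACMS Γ) : (M → V) → M → V := fun X x => S.phi x (X x)

/-- The fundamental 2-form `Φ(X,Y) = g(φX, Y)`, on vector fields. -/
def ACMS.omegaf (S : ACMS Γ) : (M → V) → (M → V) → M → ℝ :=
  fun X Y x => Γ.g x (S.phi x (X x)) (Y x)

/-- Nearly Sasakian structure: `(∇_X φ)Y + (∇_Y φ)X = 2g(X,Y)ξ − η(X)Y − η(Y)X`. -/
def ACMS.IsNearlySasakian (S : ACMS Γ) : Prop :=
  ∀ X Y : M → V, ∀ x,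
    covDer Γ S.phi X Y x + covDer Γ S.phi Y X x
      = (2 * Γ.g x (X x) (Y x)) • S.xi x - S.eta x (X x) • Y x - S.eta x (Y x) • X x

/-- Sasakian structure: `(∇_X φ)Y = g(X,Y)ξ − η(Y)X`. -/
def ACMS.IsSasakian (S : ACMS Γ) : Prop :=
  ∀ X Y : M → V, ∀ x,
    covDer Γ S.phi X Y x = Γ.g x (X x) (Y x) • S.xi x - S.eta x (Y x) • X x

/-- Nearly cosymplectic structure: `(∇_X φ)Y + (∇_Y φ)X = 0`. -/
def ACMS.IsNearlyCosymplectic (S : ACMS Γ) : Prop :=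
  ∀ X Y : M → V, ∀ x, covDer Γ S.phi X Y x + covDer Γ S.phi Y X x = 0

/-- coKähler structure: `∇φ = 0`. -/
def ACMS.IsCoKaehler (S : ACMS Γ) : Prop :=
  ∀ X Y : M → V, ∀ x, covDer Γ S.phi X Y x = 0

/-- Nearly α-Sasakian structure. -/
def ACMS.IsNearlyAlphaSasakian (S : ACMS Γ) (α : ℝ) : Prop :=
  ∀ X Y : M → V, ∀ x,
    covDer Γ S.phi X Y x + covDer Γ S.phi Y X x
      = α • ((2 * Γ.g x (X x) (Y x)) • S.xi x - S.eta x (X x) • Y x - S.eta x (Y x) • X x)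

/-- `h` is the tensor of the nearly Sasakian structure `S`: `∇_X ξ = −φX + hX`. -/
def ACMS.IsNSTensor (S : ACMS Γ) (h : M → V →ₗ[ℝ] V) : Prop :=
  ∀ X : M → V, ∀ x, Γ.nabla X S.xi x = -(S.phi x (X x)) + h x (X x)

/-- `h` is the tensor of the nearly cosymplectic structure `S`: `∇_X ξ = hX`. -/
def ACMS.IsNCTensor (S : ACMS Γ) (h : M → V →ₗ[ℝ] V) : Prop :=
  ∀ X : M → V, ∀ x, Γ.nabla X S.xi x = h x (X x)

/-- A vector field is a section of a distribution. -/
def Sect (Dst : M → Submodule ℝ V) (X : M → V) : Prop := ∀ x, X x ∈ Dst x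

/-- A distribution is integrable (involutive). -/
def IsIntegrable (Γ : RGeo M V) (Dst : M → Submodule ℝ V) : Prop :=
  ∀ X Y, Sect Dst X → Sect Dst Y → Sect Dst (Γ.lie X Y)

/-- A distribution defines a totally geodesic foliation: it is closed under
covariant differentiation along its own sections. -/
def IsTotallyGeodesic (Γ : RGeo M V) (Dst : M → Submodule ℝ V) : Prop :=
  ∀ X Y, Sect Dst X → Sect Dst Y → Sect Dst (Γ.nabla X Y)

/-- The eigendistribution of `h²` for the eigenvalue `μ`. -/
def eigD (h : M → V →ₗ[ℝ] V) (μ : ℝ) : M → Submodule ℝ V :=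
  fun x => Module.End.eigenspace (h x ∘ₗ h x) μ

/-- `(i,j,k)` is an even permutation of `(1,2,3)` (here of `(0,1,2)`). -/
def EvenPerm (i j k : Fin 3) : Prop :=
  (i, j, k) = (0, 1, 2) ∨ (i, j, k) = (1, 2, 0) ∨ (i, j, k) = (2, 0, 1)

/-- An `SU(2)`-structure on a 5-manifold, described by three almost contact
metric structures sharing `ξ`, `η`, `g` and satisfying the quaternionic
relations `φᵢφⱼ = φₖ = −φⱼφᵢ` for even permutations `(i,j,k)`. -/
structure SU2Triple (Γ : RGeo M V) : Type where
  S : Fin 3 → ACMS Γ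
  same_xi : ∀ i j, (S i).xi = (S j).xi
  same_eta : ∀ i j, (S i).eta = (S j).eta
  quat : ∀ i j k, EvenPerm i j k → ∀ x (v : V),
    (S i).phi x ((S j).phi x v) = (S k).phi x v ∧
    (S j).phi x ((S i).phi x v) = -((S k).phi x v)

/-- The tensor field `N_φ = [φ,φ] + dη ⊗ ξ`. -/
def nijenhuis (Γ : RGeo M V) (A : M → V →ₗ[ℝ] V) (eta : M → V →ₗ[ℝ] ℝ) (xi : M → V)
    (X Y : M → V) : M → V :=
  fun x => A x (A x (Γ.lie X Y x)) + Γ.lie (tapp A X) (tapp A Y) x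
    - A x (Γ.lie (tapp A X) Y x) - A x (Γ.lie X (tapp A Y) x)
    + dOne Γ (fun Z y => eta y (Z y)) X Y x • xi x

/-- Pointwise wedge product of two 2-forms on `V`, evaluated on four vectors. -/
def wedge22At (b c : V →ₗ[ℝ] V →ₗ[ℝ] ℝ) (p q r s : V) : ℝ :=
  b p q * c r s - b p r * c q s + b p s * c q r
    + b q r * c p s - b q s * c p r + b r s * c p q

/-- Pointwise wedge product of a 4-form and a 1-form on `V`, on five vectors. -/
def wedge41At (v4 : V → V → V → V → ℝ) (a : V →ₗ[ℝ] ℝ) (p q r s t : V) : ℝ :=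
  a p * v4 q r s t - a q * v4 p r s t + a r * v4 p q s t
    - a s * v4 p q r t + a t * v4 p q r s

end RGeo

/-- The data `(η, ω₁, ω₂, ω₃)` of a candidate `SU(2)`-structure on a 5-manifold:
a 1-form and three 2-forms (given pointwise). -/
structure SU2Forms (M V : Type) [AddCommGroup V] [Module ℝ V] : Type where
  eta : M → V →ₗ[ℝ] ℝ
  omega : Fin 3 → M → V →ₗ[ℝ] V →ₗ[ℝ] ℝ
  omega_alt : ∀ i x v, omega i x v v = 0

namespace SU2Forms

variable {M V : Type} [AddCommGroup V] [Module ℝ V]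

/-- `(η, ω₁, ω₂, ω₃)` is an `SU(2)`-structure: `ωᵢ ∧ ωⱼ = δᵢⱼ v` for a 4-form
`v` with `v ∧ η ≠ 0`, and `X⌟ω₁ = Y⌟ω₂` implies `ω₃(X,Y) ≥ 0`. -/
def IsSU2 (F : SU2Forms M V) : Prop :=
  (∃ v4 : M → V → V → V → V → ℝ,
    (∀ i j x p q r s, RGeo.wedge22At (F.omega i x) (F.omega j x) p q r s
        = (if i = j then (1 : ℝ) else 0) * v4 x p q r s) ∧
    (∀ x, ∃ p q r s t, RGeo.wedge41At (v4 x) (F.eta x) p q r s t ≠ 0)) ∧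
  (∀ x (u w : V), (∀ z, F.omega 0 x u z = F.omega 1 x w z) → 0 ≤ F.omega 2 x u w)

/-- `η` evaluated on vector fields. -/
def etaf (F : SU2Forms M V) : (M → V) → M → ℝ := fun X x => F.eta x (X x)

/-- `ωᵢ` evaluated on vector fields. -/
def omegaf (F : SU2Forms M V) (i : Fin 3) : (M → V) → (M → V) → M → ℝ :=
  fun X Y x => F.omega i x (X x) (Y x)

end SU2Forms

namespace RGeo

variable {M V : Type} [AddCommGroup V] [Module ℝ V]

/-- A linear connection on `(M, V, Γ)`. -/
structure ConnOf (Γ : RGeo M V) : Type where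
  nb : (M → V) → (M → V) → (M → V)
  nb_add_left : ∀ X Y Z, nb (X + Y) Z = nb X Z + nb Y Z
  nb_smul_left : ∀ (f : M → ℝ) X Y, nb (fun x => f x • X x) Y = fun x => f x • nb X Y x
  nb_add_right : ∀ X Y Z, nb X (Y + Z) = nb X Y + nb X Z
  nb_leibniz : ∀ X (f : M → ℝ) Y,
    nb X (fun x => f x • Y x) = fun x => Γ.D X f x • Y x + f x • nb X Y x

/-- The torsion of a linear connection. -/
def ConnOf.tors {Γ : RGeo M V} (C : ConnOf Γ) (X Y : M → V) : M → V :=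
  fun x => C.nb X Y x - C.nb Y X x - Γ.lie X Y x

/-- The connection parallelizes all the structure tensors `g`, `ξ`, `φ`, `η`. -/
def ConnOf.Parallelizes {Γ : RGeo M V} (C : ConnOf Γ) (S : ACMS Γ) : Prop :=
  (∀ X Y Z, Γ.D X (Γ.gf Y Z)
      = fun x => Γ.g x (C.nb X Y x) (Z x) + Γ.g x (Y x) (C.nb X Z x)) ∧
  (∀ X x, C.nb X S.xi x = 0) ∧
  (∀ X Y x, C.nb X (tapp S.phi Y) x = S.phi x (C.nb X Y x)) ∧
  (∀ X Y, Γ.D X (S.etaf Y) = fun x => S.eta x (C.nb X Y x))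

end RGeo

/-!
Write `2g((∇_X φᵢ)Y, Z) = 2g(∇_X (φᵢY), Z) + 2g(∇_X Y, φᵢZ)` and expand both terms by the
Koszul formula. On the other side, the quaternionic relations reduce every value of an `ωₐ`
with some `φ_b` in its arguments to `g`, `η` or an `ω_c` of the bare arguments; for instance
`ωⱼ(A, φₖB) = g(φⱼA, φₖB) = -g(A, φⱼφₖB) = ωᵢ(A, B)`. After this reduction the derivative
terms of `dωⱼ` and `dωₖ` cancel in pairs, those of `dωᵢ` are the Koszul derivative terms up to
derivatives of `η ⊗ η`, which the `dη` terms absorb, and the bracket terms agree pointwise.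
-/

namespace RGeo

variable {M V : Type} [AddCommGroup V] [Module ℝ V]

section Calculus

variable (Γ : RGeo M V)

theorem D_zero (X : M → V) : Γ.D X 0 = 0 := Γ.D_const X 0

theorem D_neg (X : M → V) (f : M → ℝ) : Γ.D X (-f) = -Γ.D X f := by
  have h : -f = (fun _ => (-1 : ℝ)) * f := by funext w; simp
  rw [h, Γ.D_mul_fun, Γ.D_const]
  funext w
  simp

theorem D_sub (X : M → V) (f₁ f₂ : M → ℝ) : Γ.D X (f₁ - f₂) = Γ.D X f₁ - Γ.D X f₂ := by
  rw [sub_eq_add_neg, Γ.D_add_fun, D_neg, sub_eq_add_neg]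

theorem two_mul_gf_nabla (X Y Z : M → V) (x : M) :
    2 * Γ.gf (Γ.nabla X Y) Z x
      = Γ.D X (Γ.gf Y Z) x + Γ.D Y (Γ.gf X Z) x - Γ.D Z (Γ.gf X Y) x
        + Γ.gf (Γ.lie X Y) Z x - Γ.gf (Γ.lie X Z) Y x - Γ.gf (Γ.lie Y Z) X x := by
  have compat (A B C : M → V) :
      Γ.D A (Γ.gf B C) x = Γ.g x (Γ.nabla A B x) (C x) + Γ.g x (B x) (Γ.nabla A C x) :=
    congrFun (Γ.metric_compat A B C) x
  have torsion (A B : M → V) : Γ.lie A B x = Γ.nabla A B x - Γ.nabla B A x :=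
    (congrFun (Γ.torsion_free A B) x).symm
  simp only [compat, gf, torsion, map_sub, LinearMap.sub_apply]
  linear_combination Γ.g_symm x (Γ.nabla X Z x) (Y x) + Γ.g_symm x (Γ.nabla Y Z x) (X x)
    - Γ.g_symm x (Γ.nabla Z Y x) (X x)

end Calculus

variable {Γ : RGeo M V}

namespace ACMS

variable (S : ACMS Γ) (x : M)

theorem phi_xi : S.phi x (S.xi x) = 0 := by
  set w := S.phi x (S.xi x)
  have hφw : S.phi x w = 0 := by rw [S.phi_sq, S.eta_xi, one_smul, neg_add_cancel]
  have hw : w = S.eta x w • S.xi x := by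
    simpa [hφw, neg_add_eq_zero] using (S.phi_sq x w).symm
  have hsq : (S.eta x w * S.eta x w) • S.xi x = 0 := by
    have h := congrArg (S.phi x) hw
    rw [map_smul, hφw] at h
    rw [← smul_smul, ← hw]
    exact h.symm
  have hη : S.eta x w = 0 := by
    simpa [S.eta_xi] using congrArg (S.eta x) hsq
  rw [hw, hη, zero_smul]

theorem eta_phi (v : V) : S.eta x (S.phi x v) = 0 := by
  have h := S.phi_sq x (S.phi x v)
  rw [S.phi_sq x v, map_add, map_neg, map_smul, S.phi_xi, smul_zero, add_zero,
    left_eq_add] at h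
  simpa [S.eta_xi] using congrArg (S.eta x) h

theorem g_xi (u : V) : Γ.g x u (S.xi x) = S.eta x u := by
  have h := S.metric_phi x u (S.xi x)
  rw [S.phi_xi, map_zero, S.eta_xi, mul_one] at h
  linarith

theorem g_phi_left (u v : V) : Γ.g x (S.phi x u) v = -Γ.g x u (S.phi x v) := by
  have h := S.metric_phi x u (S.phi x v)
  rw [S.eta_phi, mul_zero, sub_zero, S.phi_sq, map_add, map_neg, map_smul, S.g_xi, S.eta_phi,
    smul_zero, add_zero] at h
  linarith

theorem two_mul_g_covDer (X Y Z : M → V) :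
    2 * Γ.g x (covDer Γ S.phi X Y x) (Z x)
      = 2 * Γ.gf (Γ.nabla X (tapp S.phi Y)) Z x + 2 * Γ.gf (Γ.nabla X Y) (tapp S.phi Z) x := by
  rw [covDer, map_sub, LinearMap.sub_apply, S.g_phi_left]
  simp only [gf, tapp]
  ring

variable (A B : M → V)

theorem etaf_phi : S.etaf (tapp S.phi A) = 0 := funext fun x => S.eta_phi x (A x)

theorem gf_phi_left : Γ.gf (tapp S.phi A) B = S.omegaf A B := rfl

theorem gf_phi_right : Γ.gf A (tapp S.phi B) = -S.omegaf A B :=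
  funext fun x => by simp [gf, tapp, omegaf, S.g_phi_left]

theorem omegaf_phi_left : S.omegaf (tapp S.phi A) B = S.etaf A * S.etaf B - Γ.gf A B :=
  funext fun x => by
    simp [omegaf, tapp, etaf, gf, S.phi_sq, Γ.g_symm x (S.xi x), S.g_xi]
    ring

theorem omegaf_phi_right : S.omegaf A (tapp S.phi B) = Γ.gf A B - S.etaf A * S.etaf B :=
  funext fun x => S.metric_phi x (A x) (B x)

end ACMS

theorem EvenPerm.rotate {i j k : Fin 3} (h : EvenPerm i j k) : EvenPerm j k i := by
  rcases h with h | h | h <;> simp_all [EvenPerm, Prod.ext_iff]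

namespace SU2Triple

variable (T : SU2Triple Γ)

theorem etaf_eq (i j : Fin 3) : (T.S i).etaf = (T.S j).etaf := by
  unfold ACMS.etaf
  rw [T.same_eta i j]

variable {i j k : Fin 3}

theorem omegaf_phi_right_of_evenPerm (h : EvenPerm i j k) (A B : M → V) :
    (T.S j).omegaf A (tapp (T.S k).phi B) = (T.S i).omegaf A B := funext fun x => by
  simp [ACMS.omegaf, tapp, ACMS.g_phi_left, (T.quat j k i h.rotate x (B x)).1]

theorem omegaf_phi_right_of_evenPerm_swap (h : EvenPerm i j k) (A B : M → V) :
    (T.S j).omegaf A (tapp (T.S i).phi B) = -(T.S k).omegaf A B := funext fun x => by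
  simp [ACMS.omegaf, tapp, ACMS.g_phi_left, (T.quat i j k h x (B x)).2]

theorem omegaf_phi_left_of_evenPerm (h : EvenPerm i j k) (A B : M → V) :
    (T.S i).omegaf (tapp (T.S j).phi A) B = (T.S k).omegaf A B := funext fun x => by
  simp [ACMS.omegaf, tapp, (T.quat i j k h x (A x)).1]

end SU2Triple

end RGeo

open RGeo in
theorem covDer_phi_formula_SU2_general {M V : Type} [AddCommGroup V] [Module ℝ V]
    (Γ : RGeo M V) (T : SU2Triple Γ)
    (i j k : Fin 3) (hperm : EvenPerm i j k)
    (X Y Z : M → V) (x : M) :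
    2 * Γ.g x (covDer Γ (T.S i).phi X Y x) (Z x)
      = -(dTwo Γ (T.S i).omegaf X (tapp (T.S i).phi Y) (tapp (T.S i).phi Z) x)
        + dTwo Γ (T.S i).omegaf X Y Z x
        - dTwo Γ (T.S j).omegaf Y Z (tapp (T.S k).phi X) x
        + dTwo Γ (T.S j).omegaf (tapp (T.S i).phi Y) (tapp (T.S i).phi Z) (tapp (T.S k).phi X) x
        + dTwo Γ (T.S k).omegaf Y (tapp (T.S i).phi Z) (tapp (T.S k).phi X) x
        + dTwo Γ (T.S k).omegaf (tapp (T.S i).phi Y) Z (tapp (T.S k).phi X) x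
        + dOne Γ (T.S i).etaf (tapp (T.S i).phi Y) Z x * (T.S i).eta x (X x)
        - dOne Γ (T.S i).etaf (tapp (T.S i).phi Z) Y x * (T.S i).eta x (X x)
        + dOne Γ (T.S i).etaf (tapp (T.S i).phi Y) X x * (T.S i).eta x (Z x)
        - dOne Γ (T.S i).etaf (tapp (T.S i).phi Z) X x * (T.S i).eta x (Y x) := by
  have hjki := hperm.rotate
  have hkij := hjki.rotate
  rw [(T.S i).two_mul_g_covDer, Γ.two_mul_gf_nabla, Γ.two_mul_gf_nabla]
  simp only [dTwo, dOne, Pi.sub_apply, Pi.add_apply, ACMS.etaf_phi,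
    ACMS.gf_phi_left, ACMS.gf_phi_right, ACMS.omegaf_phi_left, ACMS.omegaf_phi_right,
    T.omegaf_phi_right_of_evenPerm hperm, T.omegaf_phi_right_of_evenPerm hjki,
    T.omegaf_phi_right_of_evenPerm_swap hperm, T.omegaf_phi_left_of_evenPerm hkij, T.etaf_eq k i]
  simp only [Γ.D_sub, Γ.D_neg, Γ.D_mul_fun, Γ.D_zero, Pi.add_apply, Pi.sub_apply,
    Pi.neg_apply, Pi.mul_apply, Pi.zero_apply]
  simp only [ACMS.etaf, Γ.lie_antisymm (tapp (T.S i).phi Z) Y,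
    Γ.lie_antisymm (tapp (T.S i).phi Y) X, Γ.lie_antisymm (tapp (T.S i).phi Z) X, Pi.neg_apply,
    map_neg]
  ring

open RGeo in
/-- Lemma.  On a 5-manifold with an `SU(2)`-structure, for any
even permutation `(i,j,k)` the covariant derivative of `φᵢ` is given by the
stated formula in terms of `dωᵢ, dωⱼ, dωₖ` and `dη`. -/
theorem covDer_phi_formula_SU2 {M V : Type} [AddCommGroup V] [Module ℝ V]
    [FiniteDimensional ℝ V] (hdim : Module.finrank ℝ V = 5)
    (Γ : RGeo M V) (T : SU2Triple Γ)
    (i j k : Fin 3) (hperm : EvenPerm i j k)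
    (X Y Z : M → V) (x : M) :
    2 * Γ.g x (covDer Γ (T.S i).phi X Y x) (Z x)
      = -(dTwo Γ (T.S i).omegaf X (tapp (T.S i).phi Y) (tapp (T.S i).phi Z) x)
        + dTwo Γ (T.S i).omegaf X Y Z x
        - dTwo Γ (T.S j).omegaf Y Z (tapp (T.S k).phi X) x
        + dTwo Γ (T.S j).omegaf (tapp (T.S i).phi Y) (tapp (T.S i).phi Z) (tapp (T.S k).phi X) x
        + dTwo Γ (T.S k).omegaf Y (tapp (T.S i).phi Z) (tapp (T.S k).phi X) x
        + dTwo Γ (T.S k).omegaf (tapp (T.S i).phi Y) Z (tapp (T.S k).phi X) x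
        + dOne Γ (T.S i).etaf (tapp (T.S i).phi Y) Z x * (T.S i).eta x (X x)
        - dOne Γ (T.S i).etaf (tapp (T.S i).phi Z) Y x * (T.S i).eta x (X x)
        + dOne Γ (T.S i).etaf (tapp (T.S i).phi Y) X x * (T.S i).eta x (Z x)
        - dOne Γ (T.S i).etaf (tapp (T.S i).phi Z) X x * (T.S i).eta x (Y x) :=
  covDer_phi_formula_SU2_general Γ T i j k hperm X Y Z x
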